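/- Let N > 1 be odd with smallest prime factor μ, and define the set 𝔠 of N×N unimodular arrays C^{a,b}(i,j) = ξ_N^{(aρ(i)+b)j} for a ∈ [1,μ−1], b ∈ [0,N−1], where ρ is a bijection of [0,N−1]. Then the maximum nontrivial periodic correlation magnitude of 𝔠 is exactly N; moreover |R_{C^{a_1,b_1},C^{a_2,b_2}}(τ)| = N² if and only if (a_1,b_1) = (a_2,b_2) and τ = 0. -/

import Mathlib

/-- Periodic correlation of the `N × N` arrays `C^{a₁,b₁}` and `C^{a₂,b₂}` (with
entries `ξ_N^{(aρ(i)+b)j}`) at shift `τ`. -/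
noncomputable def qcssR (N : ℕ) (ρ : ℕ → ℕ) (a₁ b₁ a₂ b₂ τ : ℕ) : ℂ :=
  ∑ i ∈ Finset.range N, ∑ j ∈ Finset.range N,
    Complex.exp (2 * Real.pi * Complex.I / N) ^ ((a₁ * ρ i + b₁) * j) *
      (starRingEnd ℂ)
        (Complex.exp (2 * Real.pi * Complex.I / N) ^ ((a₂ * ρ i + b₂) * ((j + τ) % N)))

namespace QCSSAux
open Finset


noncomputable def ξ (N : ℕ) : ℂ := Complex.exp (2 * Real.pi * Complex.I / N)

variable {N : ℕ}

lemma hprim (hN : 1 < N) : IsPrimitiveRoot (ξ N) N :=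
  Complex.isPrimitiveRoot_exp N (by omega)

lemma xi_ne_zero : ξ N ≠ 0 := Complex.exp_ne_zero _

lemma xi_pow_N (hN : 1 < N) : (ξ N) ^ N = 1 := (hprim hN).pow_eq_one

lemma conj_xi : (starRingEnd ℂ) (ξ N) = (ξ N)⁻¹ := by
  rw [ξ, ← Complex.exp_conj, ← Complex.exp_neg]
  congr 1
  simp only [map_div₀, map_mul, Complex.conj_I, Complex.conj_ofReal, map_ofNat, map_natCast]
  ring

lemma conj_xi_pow (m : ℕ) : (starRingEnd ℂ) ((ξ N) ^ m) = (ξ N) ^ (-(m:ℤ)) := by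
  rw [map_pow, conj_xi, inv_pow, ← zpow_natCast (ξ N) m, ← zpow_neg]

lemma xi_pow_mod (hN : 1 < N) (k : ℕ) : (ξ N) ^ (k % N) = (ξ N) ^ k := by
  conv_rhs => rw [← Nat.div_add_mod k N]
  rw [pow_add, pow_mul, xi_pow_N hN, one_pow, one_mul]

lemma xi_zpow_eq_one (hN : 1 < N) (k : ℤ) : (ξ N) ^ k = 1 ↔ (N:ℤ) ∣ k :=
  (hprim hN).zpow_eq_one_iff_dvd k

lemma abs_xi_zpow (k : ℤ) : ‖(ξ N) ^ k‖ = 1 := by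
  have h1 : ‖ξ N‖ = 1 := by
    have : (2 * (Real.pi : ℂ) * Complex.I / N) = ((2 * Real.pi / N : ℝ) : ℂ) * Complex.I := by
      push_cast; ring
    rw [ξ, this, Complex.norm_exp_ofReal_mul_I]
  rw [norm_zpow, h1, one_zpow]

lemma geom (hN : 1 < N) (x : ℂ) (hx : x ^ N = 1) :
    (∑ j ∈ range N, x ^ j) = if x = 1 then (N:ℂ) else 0 := by
  by_cases h : x = 1
  · simp [h]
  · rw [if_neg h, geom_sum_eq h, hx]
    simp

lemma qcssR_eq (hN : 1 < N) (ρ : ℕ → ℕ) (a₁ b₁ a₂ b₂ τ : ℕ) :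
    qcssR N ρ a₁ b₁ a₂ b₂ τ =
      ∑ i ∈ range N,
        (if (N:ℤ) ∣ (((a₁:ℤ) - a₂) * ρ i + ((b₁:ℤ) - b₂)) then
          (N:ℂ) * (ξ N) ^ (-(((a₂:ℤ) * ρ i + b₂) * τ)) else 0) := by
  unfold qcssR
  refine Finset.sum_congr rfl fun i _ => ?_
  set r := ρ i with hr
  have key : ∀ j : ℕ,
      (ξ N) ^ ((a₁ * r + b₁) * j) *
        (starRingEnd ℂ) ((ξ N) ^ ((a₂ * r + b₂) * ((j + τ) % N)))
      = (ξ N) ^ (-(((a₂:ℤ) * r + b₂) * τ)) *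
          ((ξ N) ^ (((a₁:ℤ) - a₂) * r + ((b₁:ℤ) - b₂))) ^ j := by
    intro j
    have hmod : (ξ N) ^ ((a₂ * r + b₂) * ((j + τ) % N)) = (ξ N) ^ ((a₂ * r + b₂) * (j + τ)) := by
      rw [mul_comm (a₂ * r + b₂) ((j + τ) % N), pow_mul, xi_pow_mod hN,
        ← pow_mul, mul_comm (j + τ) (a₂ * r + b₂)]
    rw [hmod, conj_xi_pow, ← zpow_natCast (ξ N) ((a₁ * r + b₁) * j),
      ← zpow_add₀ (xi_ne_zero), ← zpow_natCast ((ξ N) ^ (((a₁:ℤ) - a₂) * r + ((b₁:ℤ) - b₂))) j,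
      ← zpow_mul, ← zpow_add₀ (xi_ne_zero)]
    congr 1
    push_cast
    ring
  calc ∑ j ∈ range N, (ξ N) ^ ((a₁ * r + b₁) * j) *
        (starRingEnd ℂ) ((ξ N) ^ ((a₂ * r + b₂) * ((j + τ) % N)))
      = ∑ j ∈ range N, (ξ N) ^ (-(((a₂:ℤ) * r + b₂) * τ)) *
          ((ξ N) ^ (((a₁:ℤ) - a₂) * r + ((b₁:ℤ) - b₂))) ^ j :=
        Finset.sum_congr rfl fun j _ => key j
    _ = (ξ N) ^ (-(((a₂:ℤ) * r + b₂) * τ)) *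
          ∑ j ∈ range N, ((ξ N) ^ (((a₁:ℤ) - a₂) * r + ((b₁:ℤ) - b₂))) ^ j := by
        rw [Finset.mul_sum]
    _ = _ := by
        rw [geom hN _ (by
          rw [← zpow_natCast ((ξ N) ^ _) N, ← zpow_mul, xi_zpow_eq_one hN]
          exact dvd_mul_left _ _)]
        simp only [xi_zpow_eq_one hN]
        split_ifs with h <;> ring

lemma reindex (ρ : ℕ → ℕ) (hρ : Set.BijOn ρ (Set.Iio N) (Set.Iio N)) (f : ℕ → ℂ) :
    ∑ i ∈ range N, f (ρ i) = ∑ r ∈ range N, f r := by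
  refine Finset.sum_bij (fun i _ => ρ i) (fun a ha => ?_) (fun a ha b hb h => ?_)
    (fun r hr => ?_) (fun a ha => rfl)
  · simpa using hρ.mapsTo (by simpa using ha)
  · exact hρ.injOn (by simpa using ha) (by simpa using hb) h
  · obtain ⟨i, hi, hir⟩ := hρ.surjOn (by simpa using hr)
    exact ⟨i, by simpa using hi, hir⟩

lemma copr (hN : 1 < N) {a : ℕ} (h0 : a ≠ 0) (h : a < N.minFac) : Nat.Coprime a N := by
  by_contra h'
  have hg0 : Nat.gcd a N ≠ 0 := by
    simp [Nat.gcd_eq_zero_iff]; omega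
  have hg : 2 ≤ Nat.gcd a N := by
    rcases Nat.lt_or_ge (Nat.gcd a N) 2 with h2 | h2
    · interval_cases h3 : Nat.gcd a N <;> simp_all [Nat.Coprime]
    · exact h2
  have h1 := Nat.minFac_le_of_dvd hg (Nat.gcd_dvd_right a N)
  have h2 : Nat.gcd a N ≤ a := Nat.le_of_dvd (Nat.pos_of_ne_zero h0) (Nat.gcd_dvd_left a N)
  omega

-- case a₁ = a₂, b₁ ≠ b₂ : R = 0
lemma caseA1 (hN : 1 < N) (ρ : ℕ → ℕ) (a b₁ b₂ τ : ℕ) (hb₁ : b₁ < N) (hb₂ : b₂ < N)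
    (hne : b₁ ≠ b₂) : qcssR N ρ a b₁ a b₂ τ = 0 := by
  rw [qcssR_eq hN]
  refine Finset.sum_eq_zero fun i _ => ?_
  rw [if_neg]
  intro hdvd
  simp only [sub_self, zero_mul, zero_add] at hdvd
  have h0 : (b₁:ℤ) - b₂ = 0 := Int.eq_zero_of_abs_lt_dvd hdvd
    (abs_lt.mpr ⟨by push_cast; omega, by push_cast; omega⟩)
  omega

-- case a₁ = a₂, b₁ = b₂, τ ≠ 0 : R = 0
lemma caseA2 (hN : 1 < N) (ρ : ℕ → ℕ) (hρ : Set.BijOn ρ (Set.Iio N) (Set.Iio N))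
    (a b τ : ℕ) (ha0 : 1 ≤ a) (ha : a < N.minFac) (hτ0 : τ ≠ 0) (hτ : τ < N) :
    qcssR N ρ a b a b τ = 0 := by
  rw [qcssR_eq hN]
  have step : ∀ i ∈ range N,
      (if (N:ℤ) ∣ (((a:ℤ) - a) * ρ i + ((b:ℤ) - b)) then
        (N:ℂ) * (ξ N) ^ (-(((a:ℤ) * ρ i + b) * τ)) else 0)
      = (N:ℂ) * (ξ N) ^ (-((b:ℤ) * τ)) * ((ξ N) ^ (-((a:ℤ) * τ))) ^ (ρ i) := by
    intro i _
    rw [if_pos (by simp)]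
    rw [← zpow_natCast ((ξ N) ^ (-((a:ℤ) * τ))) (ρ i), ← zpow_mul, mul_assoc,
      ← zpow_add₀ xi_ne_zero]
    congr 2
    ring
  have hre : (∑ i ∈ range N, (N:ℂ) * (ξ N) ^ (-((b:ℤ) * τ)) * ((ξ N) ^ (-((a:ℤ) * τ))) ^ (ρ i))
      = ∑ r ∈ range N, (N:ℂ) * (ξ N) ^ (-((b:ℤ) * τ)) * ((ξ N) ^ (-((a:ℤ) * τ))) ^ r :=
    reindex ρ hρ (fun r => (N:ℂ) * (ξ N) ^ (-((b:ℤ) * τ)) * ((ξ N) ^ (-((a:ℤ) * τ))) ^ r)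
  rw [Finset.sum_congr rfl step, hre]
  have hne1 : (ξ N) ^ (-((a:ℤ) * τ)) ≠ 1 := by
    rw [Ne, xi_zpow_eq_one hN, Int.dvd_neg]
    intro hd
    have hd' : N ∣ a * τ := by exact_mod_cast hd
    have h6 : N ∣ τ := ((copr hN (by omega) ha).symm).dvd_of_dvd_mul_left hd'
    have h5 := Nat.le_of_dvd (Nat.pos_of_ne_zero hτ0) h6
    omega
  have hpow : ((ξ N) ^ (-((a:ℤ) * τ))) ^ N = 1 := by
    rw [← zpow_natCast ((ξ N) ^ _) N, ← zpow_mul, xi_zpow_eq_one hN]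
    exact dvd_mul_left _ _
  rw [← Finset.mul_sum, geom hN _ hpow, if_neg hne1, mul_zero]

-- trivial case : R = N * N
lemma caseT (hN : 1 < N) (ρ : ℕ → ℕ) (a b : ℕ) :
    qcssR N ρ a b a b 0 = (N:ℂ) * N := by
  rw [qcssR_eq hN]
  simp [Finset.sum_const, Finset.card_range, nsmul_eq_mul]

-- case a₁ ≠ a₂ : |R| = N
lemma caseC (hN : 1 < N) (ρ : ℕ → ℕ) (hρ : Set.BijOn ρ (Set.Iio N) (Set.Iio N))
    (a₁ b₁ a₂ b₂ τ : ℕ) (ha₁0 : 1 ≤ a₁) (ha₁ : a₁ < N.minFac) (ha₂0 : 1 ≤ a₂)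
    (ha₂ : a₂ < N.minFac) (hne : a₁ ≠ a₂) :
    ‖qcssR N ρ a₁ b₁ a₂ b₂ τ‖ = N := by
  haveI : NeZero N := ⟨by omega⟩
  have hre : (∑ i ∈ range N, (if (N:ℤ) ∣ (((a₁:ℤ) - a₂) * ρ i + ((b₁:ℤ) - b₂)) then
        (N:ℂ) * (ξ N) ^ (-(((a₂:ℤ) * ρ i + b₂) * τ)) else 0))
      = ∑ r ∈ range N, (if (N:ℤ) ∣ (((a₁:ℤ) - a₂) * r + ((b₁:ℤ) - b₂)) then
        (N:ℂ) * (ξ N) ^ (-(((a₂:ℤ) * r + b₂) * τ)) else 0) :=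
    reindex ρ hρ (fun r => if (N:ℤ) ∣ (((a₁:ℤ) - a₂) * r + ((b₁:ℤ) - b₂)) then
        (N:ℂ) * (ξ N) ^ (-(((a₂:ℤ) * r + b₂) * τ)) else 0)
  rw [qcssR_eq hN, hre]
  have hunit : IsUnit ((((a₁:ℤ) - a₂) : ℤ) : ZMod N) := by
    have hcop : Nat.Coprime ((a₁:ℤ) - a₂).natAbs N := copr hN (by omega) (by omega)
    have h1 : IsUnit (((((a₁:ℤ) - a₂).natAbs : ℕ)) : ZMod N) :=
      (ZMod.isUnit_iff_coprime _ _).mpr hcop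
    rcases Int.natAbs_eq ((a₁:ℤ) - a₂) with h | h
    · rw [h, Int.cast_natCast]; exact h1
    · rw [h, Int.cast_neg, Int.cast_natCast]; exact h1.neg
  obtain ⟨w, hw⟩ := hunit
  have hw' : (w : ZMod N) = (a₁ : ZMod N) - (a₂ : ZMod N) := by
    rw [hw]; push_cast; ring
  set s : ZMod N := ↑w⁻¹ * (-((b₁ : ZMod N) - (b₂ : ZMod N))) with hs
  have ht : s.val < N := ZMod.val_lt s
  have hkey : (w : ZMod N) * s = -((b₁ : ZMod N) - (b₂ : ZMod N)) := by
    rw [hs, ← mul_assoc, Units.mul_inv, one_mul]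
  have hcond : ∀ r : ℕ, r < N →
      (((N:ℤ) ∣ (((a₁:ℤ) - a₂) * r + ((b₁:ℤ) - b₂))) ↔ r = s.val) := by
    intro r hr
    rw [← ZMod.intCast_zmod_eq_zero_iff_dvd]
    push_cast
    constructor
    · intro h
      have h2 : (w : ZMod N) * r = -((b₁ : ZMod N) - (b₂ : ZMod N)) := by
        linear_combination h + (r : ZMod N) * hw'
      have h3 : (r : ZMod N) = s := by
        rw [hs, ← h2, ← mul_assoc, Units.inv_mul, one_mul]
      have := congrArg ZMod.val h3
      rwa [ZMod.val_cast_of_lt hr] at this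
    · intro h
      subst h
      have h3 : ((s.val : ℕ) : ZMod N) = s := ZMod.natCast_rightInverse s
      have h5 : ((a₁ : ZMod N) - a₂) * (s.val : ZMod N) + ((b₁ : ZMod N) - b₂) = 0 := by
        rw [h3, ← hw']
        linear_combination hkey
      linear_combination h5
  have hstep : ∀ r ∈ range N,
      (if (N:ℤ) ∣ (((a₁:ℤ) - a₂) * r + ((b₁:ℤ) - b₂)) then
        (N:ℂ) * (ξ N) ^ (-(((a₂:ℤ) * r + b₂) * τ)) else 0)
      = (if r = s.val then (N:ℂ) * (ξ N) ^ (-(((a₂:ℤ) * r + b₂) * τ)) else 0) :=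
    fun r hr => if_congr (hcond r (mem_range.mp hr)) rfl rfl
  rw [Finset.sum_congr rfl hstep,
    Finset.sum_ite_eq' (range N) s.val
      (fun r => (N:ℂ) * (ξ N) ^ (-(((a₂:ℤ) * r + b₂) * τ))),
    if_pos (mem_range.mpr ht)]
  rw [norm_mul, abs_xi_zpow, mul_one, Complex.norm_natCast]

lemma nontrivial_cases {N : ℕ} (hN : 1 < N) (ρ : ℕ → ℕ)
    (hρ : Set.BijOn ρ (Set.Iio N) (Set.Iio N)) (a₁ b₁ a₂ b₂ τ : ℕ)
    (ha₁0 : 1 ≤ a₁) (ha₁ : a₁ < N.minFac) (ha₂0 : 1 ≤ a₂) (ha₂ : a₂ < N.minFac)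
    (hb₁ : b₁ < N) (hb₂ : b₂ < N) (hτ : τ < N) (hnt : ¬(a₁ = a₂ ∧ b₁ = b₂ ∧ τ = 0)) :
    qcssR N ρ a₁ b₁ a₂ b₂ τ = 0 ∨ ‖qcssR N ρ a₁ b₁ a₂ b₂ τ‖ = N := by
  by_cases ha : a₁ = a₂
  · subst ha
    by_cases hb : b₁ = b₂
    · subst hb
      have hτ0 : τ ≠ 0 := by tauto
      exact Or.inl (caseA2 hN ρ hρ a₁ b₁ τ ha₁0 ha₁ hτ0 hτ)
    · exact Or.inl (caseA1 hN ρ a₁ b₁ b₂ τ hb₁ hb₂ hb)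
  · exact Or.inr (caseC hN ρ hρ a₁ b₁ a₂ b₂ τ ha₁0 ha₁ ha₂0 ha₂ ha)

end QCSSAux

/-- The family `{C^{a,b} : 1 ≤ a < μ, 0 ≤ b < N}` has maximum nontrivial periodic
correlation magnitude exactly `N`, and `|R| = N²` holds precisely for the trivial
pair `(a₁,b₁) = (a₂,b₂)` with `τ = 0`. -/
theorem qcss_flexible_max_correlation (N : ℕ) (hN : 1 < N) (hodd : Odd N)
    (ρ : ℕ → ℕ) (hρ : Set.BijOn ρ (Set.Iio N) (Set.Iio N)) :
    (∀ a₁ b₁ a₂ b₂ τ : ℕ, 1 ≤ a₁ → a₁ < N.minFac → 1 ≤ a₂ → a₂ < N.minFac →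
      b₁ < N → b₂ < N → τ < N → ¬(a₁ = a₂ ∧ b₁ = b₂ ∧ τ = 0) →
      ‖qcssR N ρ a₁ b₁ a₂ b₂ τ‖ ≤ N) ∧
    (∃ a₁ b₁ a₂ b₂ τ : ℕ, 1 ≤ a₁ ∧ a₁ < N.minFac ∧ 1 ≤ a₂ ∧ a₂ < N.minFac ∧
      b₁ < N ∧ b₂ < N ∧ τ < N ∧ ¬(a₁ = a₂ ∧ b₁ = b₂ ∧ τ = 0) ∧
      ‖qcssR N ρ a₁ b₁ a₂ b₂ τ‖ = N) ∧
    (∀ a₁ b₁ a₂ b₂ τ : ℕ, 1 ≤ a₁ → a₁ < N.minFac → 1 ≤ a₂ → a₂ < N.minFac →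
      b₁ < N → b₂ < N → τ < N →
      (‖qcssR N ρ a₁ b₁ a₂ b₂ τ‖ = (N : ℝ) ^ 2 ↔
        (a₁ = a₂ ∧ b₁ = b₂ ∧ τ = 0))) := by
  have hminFac : 3 ≤ N.minFac := by
    have hp : N.minFac.Prime := Nat.minFac_prime (by omega)
    have h2 := hp.two_le
    have hne2 : N.minFac ≠ 2 := by
      intro h
      have hdvd : 2 ∣ N := h ▸ Nat.minFac_dvd N
      rw [Nat.odd_iff] at hodd
      omega
    omega
  refine ⟨?_, ?_, ?_⟩
  · intro a₁ b₁ a₂ b₂ τ ha₁0 ha₁ ha₂0 ha₂ hb₁ hb₂ hτ hnt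
    rcases QCSSAux.nontrivial_cases hN ρ hρ a₁ b₁ a₂ b₂ τ ha₁0 ha₁ ha₂0 ha₂ hb₁ hb₂ hτ hnt with
      h | h
    · rw [h, norm_zero]; positivity
    · exact le_of_eq h
  · refine ⟨1, 0, 2, 0, 0, le_refl 1, by omega, by omega, by omega, by omega, by omega,
      by omega, by simp, ?_⟩
    exact QCSSAux.caseC hN ρ hρ 1 0 2 0 0 (by omega) (by omega) (by omega) (by omega)
      (by omega)
  · intro a₁ b₁ a₂ b₂ τ ha₁0 ha₁ ha₂0 ha₂ hb₁ hb₂ hτ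
    constructor
    · intro habs
      by_contra hnt
      have hN2 : (2:ℝ) ≤ N := by exact_mod_cast hN
      rcases QCSSAux.nontrivial_cases hN ρ hρ a₁ b₁ a₂ b₂ τ ha₁0 ha₁ ha₂0 ha₂ hb₁ hb₂ hτ hnt with
        h | h
      · rw [h, norm_zero] at habs
        nlinarith
      · rw [h] at habs
        nlinarith
    · rintro ⟨rfl, rfl, rfl⟩
      rw [QCSSAux.caseT hN ρ a₁ b₁, norm_mul, Complex.norm_natCast, sq]
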